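/- The set of smooth 2π-periodic solutions (s,t,r) : ℝ → ℝ³ of the first-order system s' = t, t' = −(r − s/2), r' = −t/2 is a real vector space of dimension exactly 1, spanned by the constant solution (1, 0, 1/2). -/

import Mathlib

lemma aux_exp_zero (k : ℝ) (hk : Real.exp (k * (2 * Real.pi)) ≠ 1) (f : ℝ → ℝ)
    (hf : Differentiable ℝ f) (hd : ∀ x, deriv f x = k * f x)
    (hp : ∀ x, f (x + 2 * Real.pi) = f x) : ∀ x, f x = 0 := by
  have key : ∀ x y : ℝ, f x * Real.exp (-(k * x)) = f y * Real.exp (-(k * y)) := by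
    apply is_const_of_deriv_eq_zero
    · exact hf.mul (Real.differentiable_exp.comp ((differentiable_id.const_mul k).neg))
    · intro x
      have h1 : HasDerivAt f (k * f x) x := by
        have := (hf x).hasDerivAt
        rwa [hd x] at this
      have h2 : HasDerivAt (fun y : ℝ => -(k * y)) (-k) x := by
        have := ((hasDerivAt_id x).const_mul k).neg
        rw [mul_one] at this; exact this
      have h3 : HasDerivAt (fun y : ℝ => Real.exp (-(k * y)))
          (Real.exp (-(k * x)) * (-k)) x := h2.exp
      have h4 := h1.mul h3
      have := h4.deriv
      exact this.trans (by ring)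
  have h0 : ∀ x, f x = f 0 * Real.exp (k * x) := by
    intro x
    have h := key x 0
    simp only [mul_zero, neg_zero, Real.exp_zero, mul_one] at h
    have h2 := congrArg (fun y => y * Real.exp (k * x)) h
    simp only [mul_assoc, ← Real.exp_add] at h2
    simpa using h2
  have hf0 : f 0 = 0 := by
    have h1 : f 0 * Real.exp (k * (2 * Real.pi)) = f 0 := by
      have := hp 0
      rw [h0 (0 + 2 * Real.pi), h0 0] at this
      simpa using this
    rcases mul_right_eq_self₀.mp h1 with h | h
    · exact absurd h hk
    · exact h
  intro x; rw [h0 x, hf0, zero_mul]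

lemma exp_ne_one_of_ne_zero (k : ℝ) (hk : k * (2 * Real.pi) ≠ 0) :
    Real.exp (k * (2 * Real.pi)) ≠ 1 := by
  simp [Real.exp_eq_one_iff, hk]

/-- The smooth `2π`-periodic solutions of the `μ = −1/2` tractor system `s' = t`,
`t' = −(r − s/2)`, `r' = −t/2` form a one-dimensional space spanned by the constant
solution `(1, 0, 1/2)`. -/
theorem stmt_10 (s t r : ℝ → ℝ) :
    (ContDiff ℝ (⊤ : ℕ∞) s ∧ ContDiff ℝ (⊤ : ℕ∞) t ∧ ContDiff ℝ (⊤ : ℕ∞) r ∧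
      (∀ x, s (x + 2 * Real.pi) = s x) ∧ (∀ x, t (x + 2 * Real.pi) = t x) ∧
      (∀ x, r (x + 2 * Real.pi) = r x) ∧
      (∀ x, deriv s x = t x) ∧ (∀ x, deriv t x = -(r x - s x / 2)) ∧
      (∀ x, deriv r x = -(t x / 2))) ↔
    (∃ a : ℝ, (s = fun _ => a) ∧ (t = fun _ => 0) ∧ (r = fun _ => a / 2)) := by
  constructor
  · rintro ⟨hs, ht, hr, hps, hpt, hpr, hds, hdt, hdr⟩
    have hsd : Differentiable ℝ s := hs.differentiable (by simp)
    have htd : Differentiable ℝ t := ht.differentiable (by simp)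
    have hrd : Differentiable ℝ r := hr.differentiable (by simp)
    set c : ℝ := r 0 + s 0 / 2 with hc
    -- r + s/2 is constant
    have hconst : ∀ x, r x + s x / 2 = c := by
      have key : ∀ x y : ℝ, r x + s x / 2 = r y + s y / 2 := by
        apply is_const_of_deriv_eq_zero
        · exact hrd.add (hsd.div_const 2)
        · intro x
          have h1 : HasDerivAt r (-(t x / 2)) x := by
            have := (hrd x).hasDerivAt; rwa [hdr x] at this
          have h2 : HasDerivAt s (t x) x := by
            have := (hsd x).hasDerivAt; rwa [hds x] at this
          have h3 : HasDerivAt (fun y => r y + s y / 2) (-(t x / 2) + t x / 2) x :=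
            h1.add (h2.div_const 2)
          rw [h3.deriv]; ring
      intro x; exact key x 0
    -- p = t + s - c satisfies p' = p
    have hp0 : ∀ x, t x + s x - c = 0 := by
      apply aux_exp_zero 1 (exp_ne_one_of_ne_zero 1 (by positivity))
        (fun x => t x + s x - c)
      · exact (htd.add hsd).sub_const c
      · intro x
        have h1 : HasDerivAt t (s x - c) x := by
          have := (htd x).hasDerivAt
          rw [hdt x] at this
          have hc2 : -(r x - s x / 2) = s x - c := by
            have := hconst x; linarith
          rwa [hc2] at this
        have h2 : HasDerivAt s (t x) x := by
          have := (hsd x).hasDerivAt; rwa [hds x] at this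
        have h3 : HasDerivAt (fun y => t y + s y - c) ((s x - c) + t x) x :=
          (h1.add h2).sub_const c
        rw [h3.deriv]; ring
      · intro x; rw [hpt x, hps x]
    -- q = t - s + c satisfies q' = -q
    have hq0 : ∀ x, t x - s x + c = 0 := by
      apply aux_exp_zero (-1) (exp_ne_one_of_ne_zero (-1) (by positivity))
        (fun x => t x - s x + c)
      · exact (htd.sub hsd).add_const c
      · intro x
        have h1 : HasDerivAt t (s x - c) x := by
          have := (htd x).hasDerivAt
          rw [hdt x] at this
          have hc2 : -(r x - s x / 2) = s x - c := by
            have := hconst x; linarith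
          rwa [hc2] at this
        have h2 : HasDerivAt s (t x) x := by
          have := (hsd x).hasDerivAt; rwa [hds x] at this
        have h3 : HasDerivAt (fun y => t y - s y + c) ((s x - c) - t x) x :=
          (h1.sub h2).add_const c
        rw [h3.deriv]; ring
      · intro x; rw [hpt x, hps x]
    refine ⟨c, ?_, ?_, ?_⟩
    · funext x; have := hp0 x; have := hq0 x; linarith
    · funext x; have := hp0 x; have := hq0 x; linarith
    · funext x
      have hsx : s x = c := by have := hp0 x; have := hq0 x; linarith
      have h1 := hconst x
      rw [hsx] at h1
      show r x = c / 2
      linarith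
  · rintro ⟨a, hs, ht, hr⟩
    subst hs ht hr
    refine ⟨contDiff_const, contDiff_const, contDiff_const, fun _ => rfl, fun _ => rfl,
      fun _ => rfl, ?_, ?_, ?_⟩ <;> intro x <;> simp
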